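/- arXiv:1902.01190 — 3 statements merged into one kernel-verified Lean document; each statement's English description precedes it below -/
import Mathlib

section
/- Let p be a polynomial with k distinct roots, all of them simple, and let q be a polynomial of degree n, with k + n ≥ 2. Then the degree of the rational Newton map N_{pe^q}(z) = z - p(z)/(p'(z)+p(z)q'(z)) equals k + n, i.e., the numerator z(p'+pq') - p and denominator p'+pq' are coprime polynomials, with max of their degrees equal k + n. -/
open Polynomial

/-- If p has k distinct roots, all simple, and q has degree n with k + n ≥ 2, then the
numerator z(p'+pq') - p and denominator p'+pq' of the Newton map of p·e^q are coprime,
and the degree of the Newton map, i.e. the maximum of their degrees, equals k + n. -/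
theorem newton_map_degree (p q : Polynomial ℂ) (hp : p ≠ 0) (hsq : Squarefree p)
    (k n : ℕ) (hk : p.roots.toFinset.card = k) (hn : q.natDegree = n) (hkn : 2 ≤ k + n) :
    IsCoprime (X * (p.derivative + p * q.derivative) - p) (p.derivative + p * q.derivative) ∧
    max (X * (p.derivative + p * q.derivative) - p).natDegree
        (p.derivative + p * q.derivative).natDegree = k + n := by
  have hsep : p.Separable := PerfectField.separable_iff_squarefree.mpr hsq
  -- k is the degree of p
  have hroots : p.roots.card = p.natDegree :=
    Polynomial.splits_iff_card_roots.mp (IsAlgClosed.splits p)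
  have hkd : k = p.natDegree := by
    rw [← hk, Multiset.toFinset_card_of_nodup (Polynomial.nodup_roots hsep), hroots]
  -- coprimality
  have hcop : IsCoprime (X * (p.derivative + p * q.derivative) - p)
      (p.derivative + p * q.derivative) := by
    have h1 : IsCoprime p (p.derivative + p * q.derivative) :=
      hsep.add_mul_left_right q.derivative
    have h2 := h1.neg_left.add_mul_left_left X
    have : -p + (p.derivative + p * q.derivative) * X
        = X * (p.derivative + p * q.derivative) - p := by ring
    rwa [this] at h2
  refine ⟨hcop, ?_⟩
  rcases Nat.eq_zero_or_pos n with hn0 | hn1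
  · -- q is constant, q' = 0
    subst hn0
    have hq' : q.derivative = 0 := derivative_of_natDegree_zero hn
    have hd2 : 2 ≤ p.natDegree := by omega
    rw [hq', mul_zero, add_zero]
    obtain ⟨e, hde⟩ : ∃ e, p.natDegree = e + 1 := ⟨p.natDegree - 1, by omega⟩
    have he1 : 1 ≤ e := by omega
    have hcoeff : (X * p.derivative - p).coeff (e + 1) = p.coeff (e + 1) * e := by
      rw [coeff_sub, coeff_X_mul, coeff_derivative]
      ring
    have hlc : p.coeff (e + 1) ≠ 0 := by
      rw [← hde, ← leadingCoeff]
      exact leadingCoeff_ne_zero.mpr hp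
    have hne : (X * p.derivative - p).coeff (e + 1) ≠ 0 := by
      rw [hcoeff]
      exact mul_ne_zero hlc (Nat.cast_ne_zero.mpr (by omega))
    have hle : (X * p.derivative - p).natDegree ≤ e + 1 := by
      refine (natDegree_sub_le _ _).trans ?_
      simp only [max_le_iff]
      refine ⟨natDegree_mul_le.trans ?_, hde.le⟩
      have := natDegree_derivative_le p
      simp only [natDegree_X]
      omega
    have hge : e + 1 ≤ (X * p.derivative - p).natDegree := le_natDegree_of_ne_zero hne
    have hnum : (X * p.derivative - p).natDegree = e + 1 := le_antisymm hle hge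
    have hden : p.derivative.natDegree ≤ p.natDegree - 1 := natDegree_derivative_le p
    rw [hnum]
    omega
  · -- q nonconstant, q' ≠ 0
    have hq' : q.derivative ≠ 0 := by
      intro h
      have := natDegree_eq_zero_of_derivative_eq_zero h
      omega
    set D := p.derivative + p * q.derivative with hD
    have hdpq : (p * q.derivative).degree = ((p.natDegree + (n - 1) : ℕ) : WithBot ℕ) := by
      rw [degree_mul, degree_eq_natDegree hp, degree_derivative_eq q (by omega), hn]
      push_cast
      ring
    have hlt : p.derivative.degree < (p * q.derivative).degree := by
      calc p.derivative.degree < p.degree := degree_derivative_lt hp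
        _ ≤ (p * q.derivative).degree := by
            rw [degree_mul]
            conv_lhs => rw [← add_zero p.degree]
            exact add_le_add le_rfl (zero_le_degree_iff.mpr hq')
    have hDdeg : D.degree = ((p.natDegree + (n - 1) : ℕ) : WithBot ℕ) := by
      rw [hD, degree_add_eq_right_of_degree_lt hlt, hdpq]
    have hDnat : D.natDegree = p.natDegree + (n - 1) := natDegree_eq_of_degree_eq_some hDdeg
    have hXD : (X * D).degree = ((p.natDegree + n : ℕ) : WithBot ℕ) := by
      rw [degree_mul, degree_X, hDdeg]
      norm_cast
      omega
    have hplt : (-p).degree < (X * D).degree := by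
      rw [degree_neg, hXD, degree_eq_natDegree hp]
      exact_mod_cast (by omega : p.natDegree < p.natDegree + n)
    have hNdeg : (X * D - p).degree = ((p.natDegree + n : ℕ) : WithBot ℕ) := by
      rw [sub_eq_add_neg, degree_add_eq_left_of_degree_lt hplt, hXD]
    have hNnat : (X * D - p).natDegree = p.natDegree + n := natDegree_eq_of_degree_eq_some hNdeg
    rw [hNnat, hDnat]
    omega
end

section
/- Let p be a nonzero polynomial and q a polynomial with deg(q) = n > 0. Then the rational map N(z) = z - p(z)/(p'(z) + p(z)q'(z)) fixes ∞ and, in the local coordinate w = 1/z, the map g(w) = 1/N(1/w) satisfies g(w) = w + a·w^{n+1} + O(w^{n+2}) for some a ≠ 0; that is, ∞ is a parabolic fixed point of N with multiplier +1 and multiplicity n+1. -/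
open Polynomial Topology Filter Asymptotics

private lemma rev_eval (f : Polynomial ℂ) {w : ℂ} (hw : w ≠ 0) :
    f.reverse.eval w = f.eval w⁻¹ * w ^ f.natDegree := by
  have hw' : w⁻¹ ≠ 0 := inv_ne_zero hw
  letI : Invertible (w⁻¹) := invertibleOfNonzero hw'
  have h := Polynomial.eval₂_reverse_mul_pow (RingHom.id ℂ) w⁻¹ f
  rw [invOf_eq_inv, inv_inv] at h
  change f.reverse.eval w * (w⁻¹) ^ f.natDegree = f.eval w⁻¹ at h
  have h' : f.reverse.eval w * (w⁻¹) ^ f.natDegree * w ^ f.natDegree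
      = f.eval w⁻¹ * w ^ f.natDegree := by rw [h]
  rw [mul_assoc, ← mul_pow, inv_mul_cancel₀ hw, one_pow, mul_one] at h'
  exact h'

/-- For p ≠ 0 and deg q = n > 0, the rational Newton map N(z) = z - p/(p'+pq') fixes ∞,
and in the coordinate w = 1/z the map g(w) = 1/N(1/w) has the form
g(w) = w + a w^{n+1} + O(w^{n+2}) with a ≠ 0: ∞ is a parabolic fixed point of
multiplier +1 and multiplicity n + 1. -/
theorem newton_parabolic_at_infinity (p q : Polynomial ℂ) (hp : p ≠ 0) (n : ℕ)
    (hn : q.natDegree = n) (hpos : 0 < n) (N g : ℂ → ℂ)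
    (hN : ∀ z, N z = z - p.eval z / ((p.derivative + p * q.derivative).eval z))
    (hg : ∀ w, g w = (N w⁻¹)⁻¹) :
    Tendsto g (𝓝[≠] (0 : ℂ)) (𝓝 0) ∧
    ∃ a : ℂ, a ≠ 0 ∧
      (fun w => g w - w - a * w ^ (n + 1)) =O[𝓝[≠] (0 : ℂ)] fun w => w ^ (n + 2) := by
  obtain ⟨m, rfl⟩ : ∃ m, n = m + 1 := ⟨n - 1, (Nat.succ_pred_eq_of_pos hpos).symm⟩
  set n := m + 1
  set D := p.derivative + p * q.derivative with hD
  -- degree of q.derivative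
  have hq' : q.derivative.degree = ((m : ℕ) : WithBot ℕ) := by
    have := Polynomial.degree_derivative_eq q (by omega : 0 < q.natDegree)
    rwa [hn, show n - 1 = m from rfl] at this
  -- degree facts about D
  have hlt : p.derivative.degree < (p * q.derivative).degree := by
    rw [Polynomial.degree_mul]
    calc p.derivative.degree < p.degree := Polynomial.degree_derivative_lt hp
      _ ≤ p.degree + q.derivative.degree := by
          rw [hq']
          exact le_add_of_nonneg_right (by exact_mod_cast Nat.zero_le m)
  have hdegD : D.degree = ((p.natDegree + m : ℕ) : WithBot ℕ) := by
    rw [hD, Polynomial.degree_add_eq_right_of_degree_lt hlt, Polynomial.degree_mul,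
      hq', Polynomial.degree_eq_natDegree hp, ← Nat.cast_add]
  have hD0 : D ≠ 0 := by
    intro h
    rw [h, Polynomial.degree_zero] at hdegD
    exact absurd hdegD WithBot.bot_ne_coe
  have hdD : D.natDegree = p.natDegree + m :=
    Polynomial.natDegree_eq_of_degree_eq_some hdegD
  -- reversed polynomials
  set P := p.reverse with hPdef
  set Q := D.reverse with hQdef
  have hP0 : P.eval 0 ≠ 0 := by
    rw [← Polynomial.coeff_zero_eq_eval_zero, hPdef, Polynomial.coeff_zero_reverse]
    exact Polynomial.leadingCoeff_ne_zero.mpr hp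
  have hQ0 : Q.eval 0 ≠ 0 := by
    rw [← Polynomial.coeff_zero_eq_eval_zero, hQdef, Polynomial.coeff_zero_reverse]
    exact Polynomial.leadingCoeff_ne_zero.mpr hD0
  set den : ℂ → ℂ := fun w => Q.eval w - w ^ n * P.eval w with hden
  have hden0 : den 0 ≠ 0 := by
    simp only [hden, zero_pow (by omega : n ≠ 0), zero_mul, sub_zero]
    exact hQ0
  have hdenCont : Continuous den := by
    apply Continuous.sub
    · exact Q.continuous_aeval
    · exact Continuous.mul (continuous_pow n) P.continuous_aeval
  have hQCont : Continuous fun w => Q.eval w := Q.continuous_aeval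
  -- eventual nonvanishing
  have hdenEv : ∀ᶠ w in 𝓝 (0 : ℂ), den w ≠ 0 :=
    hdenCont.continuousAt.eventually_ne hden0
  have hQEv : ∀ᶠ w in 𝓝 (0 : ℂ), Q.eval w ≠ 0 :=
    hQCont.continuousAt.eventually_ne hQ0
  set G : ℂ → ℂ := fun w => w * Q.eval w / den w with hG
  -- g = G eventually on 𝓝[≠] 0
  have heq : g =ᶠ[𝓝[≠] (0 : ℂ)] G := by
    filter_upwards [nhdsWithin_le_nhds hdenEv, nhdsWithin_le_nhds hQEv,
      self_mem_nhdsWithin] with w hdw hQw (hw : w ≠ 0)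
    have e1 : P.eval w = p.eval w⁻¹ * w ^ p.natDegree := rev_eval p hw
    have e2 : Q.eval w = D.eval w⁻¹ * w ^ D.natDegree := rev_eval D hw
    have hDw : D.eval w⁻¹ ≠ 0 := by
      intro h
      rw [e2, h, zero_mul] at hQw
      exact hQw rfl
    have e1' : p.eval w⁻¹ = P.eval w / w ^ p.natDegree := by
      rw [e1]; field_simp
    have e2' : D.eval w⁻¹ = Q.eval w / w ^ D.natDegree := by
      rw [e2]; field_simp
    have hNval : N w⁻¹ = (Q.eval w - w ^ n * P.eval w) / (w * Q.eval w) := by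
      rw [hN, e1', e2', hdD]
      rw [div_div_div_eq, show n = m + 1 from rfl]
      field_simp
      ring
    show g w = G w
    simp only [hg, hNval, hG, hden, inv_div]
  -- Part 1: tendsto
  have hGcont : ContinuousAt G 0 := by
    apply ContinuousAt.div
    · exact (continuous_id.mul hQCont).continuousAt
    · exact hdenCont.continuousAt
    · exact hden0
  have hG0 : G 0 = 0 := by simp [hG]
  have ht : Tendsto g (𝓝[≠] (0 : ℂ)) (𝓝 0) := by
    have h2 : Tendsto G (𝓝[≠] (0 : ℂ)) (𝓝 (G 0)) :=
      hGcont.tendsto.mono_left nhdsWithin_le_nhds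
    rw [hG0] at h2
    exact h2.congr' heq.symm
  refine ⟨ht, P.eval 0 / Q.eval 0, div_ne_zero hP0 hQ0, ?_⟩
  set a := P.eval 0 / Q.eval 0 with ha
  -- the remainder function
  set φ : ℂ → ℂ := fun w => P.eval w / den w - a with hφ
  have hφ0 : φ 0 = 0 := by
    simp only [hφ, ha, hden, zero_pow (by omega : n ≠ 0), zero_mul, sub_zero, sub_self]
  have hφdiff : DifferentiableAt ℂ φ 0 := by
    apply DifferentiableAt.sub_const
    exact (P.differentiable.differentiableAt).div
      ((Q.differentiable.differentiableAt).sub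
        ((differentiable_pow n).differentiableAt.mul P.differentiable.differentiableAt))
      hden0
  have hφO : φ =O[𝓝 (0 : ℂ)] fun w => w := by
    have := hφdiff.isBigO_sub
    simpa [hφ0] using this
  -- key identity eventually
  have hkey : (fun w => g w - w - a * w ^ (n + 1)) =ᶠ[𝓝[≠] (0 : ℂ)]
      (fun w => w ^ (n + 1) * φ w) := by
    filter_upwards [heq, nhdsWithin_le_nhds hdenEv] with w hgw hdw
    show g w - w - a * w ^ (n + 1) = w ^ (n + 1) * φ w
    simp only [hgw, hG, hφ, hden] at *
    field_simp
    ring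
  calc (fun w => g w - w - a * w ^ (n + 1))
      =O[𝓝[≠] (0 : ℂ)] (fun w => w ^ (n + 1) * φ w) := by
        apply IsBigO.congr' (isBigO_refl _ _) hkey.symm (EventuallyEq.refl _ _)
    _ =O[𝓝[≠] (0 : ℂ)] fun w => w ^ (n + 2) := by
        have h1 : (fun w : ℂ => w ^ (n + 1) * φ w) =O[𝓝[≠] (0 : ℂ)]
            fun w => w ^ (n + 1) * w :=
          (isBigO_refl (fun w : ℂ => w ^ (n + 1)) _).mul (hφO.mono nhdsWithin_le_nhds)
        refine h1.trans ?_
        apply IsBigO.of_bound 1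
        filter_upwards with w
        simp [← pow_succ]
end

section
/- Let N be a rational map and suppose 1/(z - N(z)) = Σ_{i=1}^k m_i/(z - z_i) + s(z) where the z_i are distinct complex numbers, m_i ≥ 1 are integers, and s is a polynomial. Define p(z) = ∏_{i=1}^k (z - z_i)^{m_i} and q(z) = ∫_0^z s(w)dw. Then N(z) = z - p(z)/(p'(z) + p(z)q'(z)); in particular N is the Newton map of the entire function p·e^q. -/
open Polynomial

/-! The logarithmic derivative of `p = ∏ (X - zᵢ)^mᵢ` is `p'/p = ∑ mᵢ/(w - zᵢ)`, so the
hypothesis says `p' + p q' = p · (w - N w)⁻¹` off the zeros of `p`; solving for `N w` gives the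
Newton form. -/

section LogarithmicDerivative

variable {K : Type*} [Field K]

theorem eval_derivative_X_sub_C_pow (a w : K) (n : ℕ) (hw : w ≠ a) :
    (derivative ((X - C a) ^ n)).eval w = ((X - C a) ^ n).eval w * (n / (w - a)) := by
  have hwa : w - a ≠ 0 := sub_ne_zero.mpr hw
  rcases n with _ | n
  · simp
  · simp only [derivative_X_sub_C_pow, eval_mul, eval_pow, eval_sub, eval_X, eval_C,
      Nat.add_sub_cancel]
    field_simp
    ring

theorem eval_derivative_prod_X_sub_C_pow {ι : Type*} (s : Finset ι) (z : ι → K) (m : ι → ℕ)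
    {w : K} (hw : ∀ i ∈ s, w ≠ z i) :
    (derivative (∏ i ∈ s, (X - C (z i)) ^ m i)).eval w
      = (∏ i ∈ s, (X - C (z i)) ^ m i).eval w * ∑ i ∈ s, (m i : K) / (w - z i) := by
  induction s using Finset.cons_induction with
  | empty => simp
  | cons a s ha ih =>
    rw [Finset.forall_mem_cons] at hw
    rw [Finset.prod_cons, Finset.sum_cons, derivative_mul, eval_add, eval_mul, eval_mul,
      eval_derivative_X_sub_C_pow _ _ _ hw.1, ih hw.2, eval_mul]
    ring

end LogarithmicDerivative

theorem rational_map_with_partial_fractions_is_newton_general (N : ℂ → ℂ) (k : ℕ)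
    (z : Fin k → ℂ) (m : Fin k → ℕ)
    (s : Polynomial ℂ)
    (hpf : ∀ w : ℂ, (∀ i, w ≠ z i) → w ≠ N w →
      (w - N w)⁻¹ = (∑ i, (m i : ℂ) / (w - z i)) + s.eval w)
    (p q : Polynomial ℂ) (hp : p = ∏ i, (X - C (z i)) ^ m i)
    (hq : q.derivative = s) :
    ∀ w : ℂ, (∀ i, w ≠ z i) → w ≠ N w →
      N w = w - p.eval w / ((p.derivative + p * q.derivative).eval w) := by
  intro w hw hN
  have hpw : p.eval w ≠ 0 := by
    simp only [hp, eval_prod, eval_pow, eval_sub, eval_X, eval_C]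
    exact Finset.prod_ne_zero_iff.mpr fun i _ => pow_ne_zero _ (sub_ne_zero.mpr (hw i))
  have hdenom : (p.derivative + p * q.derivative).eval w = p.eval w * (w - N w)⁻¹ := by
    rw [hpf w hw hN, eval_add, eval_mul, hq, hp,
      eval_derivative_prod_X_sub_C_pow _ _ _ fun i _ => hw i]
    ring
  rw [hdenom, div_mul_cancel_left₀ hpw, inv_inv]
  ring

/-- If 1/(z - N z) has partial fraction decomposition ∑ mᵢ/(z - zᵢ) + s(z) with distinct
zᵢ and integers mᵢ ≥ 1, then setting p = ∏ (z - zᵢ)^{mᵢ} and q = ∫₀^z s, the map N is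
given by N(z) = z - p/(p' + p q'), i.e. N is the Newton map of p·e^q. -/
theorem rational_map_with_partial_fractions_is_newton (N : ℂ → ℂ) (k : ℕ)
    (z : Fin k → ℂ) (hz : Function.Injective z) (m : Fin k → ℕ) (hm : ∀ i, 1 ≤ m i)
    (s : Polynomial ℂ)
    (hpf : ∀ w : ℂ, (∀ i, w ≠ z i) → w ≠ N w →
      (w - N w)⁻¹ = (∑ i, (m i : ℂ) / (w - z i)) + s.eval w)
    (p q : Polynomial ℂ) (hp : p = ∏ i, (X - C (z i)) ^ m i)
    (hq : q.derivative = s) (hq0 : q.eval 0 = 0) :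
    ∀ w : ℂ, (∀ i, w ≠ z i) → w ≠ N w →
      N w = w - p.eval w / ((p.derivative + p * q.derivative).eval w) :=
  rational_map_with_partial_fractions_is_newton_general N k z m s hpf p q hp hq
end
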